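/- Let m ≥ 2 and n ≥ 1 be integers and let 1 ≤ d ≤ n. Let P_d be the set of ordered pairs (a,b) of lists over Fin m of length at most n such that the longest common prefix of a and b has length exactly d. Then (m − 1)·|P_d| = m^d·(m^{2(n−d)+1} − 1). -/

import Mathlib

/-!
A pair whose common prefix is nonempty starts with a common letter; stripping it is an
`m`-to-one correspondence with pairs one level shorter, so `|P_d(n)| = m^d |P_0(n - d)|`.
Pairs with empty common prefix are counted by complement: among pairs of lists of length
`≤ k + 1`, exactly `m |L_k|²` share a first letter, where `|L_k| = 1 + m + ⋯ + m^k`.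
-/

/-- The longest common prefix of two lists. -/
def lcp {α : Type*} [DecidableEq α] : List α → List α → List α
  | a :: as, b :: bs => if a = b then a :: lcp as bs else []
  | _, _ => []

open Finset

variable {α : Type*} [DecidableEq α]

@[simp]
lemma lcp_nil_left (l : List α) : lcp [] l = [] := by
  cases l <;> rfl

@[simp]
lemma lcp_nil_right (l : List α) : lcp l [] = [] := by
  cases l <;> rfl

lemma lcp_cons (a b : α) (as bs : List α) :
    lcp (a :: as) (b :: bs) = if a = b then a :: lcp as bs else [] := rfl

variable [Fintype α]

variable (α) in
def listsLE : ℕ → Finset (List α)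
  | 0 => {[]}
  | n + 1 => insert [] ((univ ×ˢ listsLE n).image fun p => p.1 :: p.2)

@[simp]
lemma mem_listsLE {n : ℕ} {l : List α} : l ∈ listsLE α n ↔ l.length ≤ n := by
  induction n generalizing l with
  | zero => cases l <;> simp [listsLE]
  | succ n ih => cases l <;> simp [listsLE, ih]

lemma card_listsLE_succ (n : ℕ) :
    #(listsLE α (n + 1)) = 1 + Fintype.card α * #(listsLE α n) := by
  rw [listsLE, card_insert_of_notMem (by simp), card_image_of_injective _ (by
    rintro ⟨a, l⟩ ⟨b, k⟩ h; simpa using h), card_product, card_univ, add_comm]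

lemma sub_one_mul_card_listsLE (n : ℕ) :
    ((Fintype.card α : ℤ) - 1) * #(listsLE α n) = Fintype.card α ^ (n + 1) - 1 := by
  induction n with
  | zero => simp [listsLE]
  | succ n ih =>
    rw [card_listsLE_succ]
    push_cast
    linear_combination (Fintype.card α : ℤ) * ih

variable (α) in
def lcpPairs (n d : ℕ) : Finset (List α × List α) :=
  (listsLE α n ×ˢ listsLE α n).filter fun p => (lcp p.1 p.2).length = d

lemma filter_lcp_length_eq_image {q : ℕ → Prop} [DecidablePred q] (hq : ¬ q 0) (n : ℕ) :
    (listsLE α (n + 1) ×ˢ listsLE α (n + 1)).filter (fun p => q (lcp p.1 p.2).length) =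
      (univ ×ˢ (listsLE α n ×ˢ listsLE α n).filter
          fun p => q ((lcp p.1 p.2).length + 1)).image
        fun x : α × (List α × List α) => (x.1 :: x.2.1, x.1 :: x.2.2) := by
  ext ⟨a, b⟩
  cases a with
  | nil => simp [hq]
  | cons x u =>
    cases b with
    | nil => simp [hq]
    | cons y v =>
      by_cases hxy : x = y
      · subst hxy; simp [lcp_cons]
      · simp [lcp_cons, hxy, hq]

lemma card_filter_lcp_length {q : ℕ → Prop} [DecidablePred q] (hq : ¬ q 0) (n : ℕ) :
    #((listsLE α (n + 1) ×ˢ listsLE α (n + 1)).filter fun p => q (lcp p.1 p.2).length) =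
      Fintype.card α *
        #((listsLE α n ×ˢ listsLE α n).filter fun p => q ((lcp p.1 p.2).length + 1)) := by
  rw [filter_lcp_length_eq_image hq, card_image_of_injective _ (by
    rintro ⟨x, u, v⟩ ⟨y, u', v'⟩ h; simp_all), card_product, card_univ]

lemma card_lcpPairs_succ_succ (n d : ℕ) :
    #(lcpPairs α (n + 1) (d + 1)) = Fintype.card α * #(lcpPairs α n d) := by
  simpa [lcpPairs] using card_filter_lcp_length (α := α) (q := (· = d + 1)) (by simp) n

lemma card_lcpPairs_add (n d : ℕ) :
    #(lcpPairs α (n + d) d) = Fintype.card α ^ d * #(lcpPairs α n 0) := by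
  induction d with
  | zero => simp
  | succ d ih => rw [← add_assoc, card_lcpPairs_succ_succ, ih, pow_succ', mul_assoc]

lemma card_lcpPairs_zero_add (n : ℕ) :
    #(lcpPairs α (n + 1) 0) + Fintype.card α * #(listsLE α n) ^ 2 =
      #(listsLE α (n + 1)) ^ 2 := by
  have hne := card_filter_lcp_length (α := α) (q := (· ≠ 0)) (by simp) n
  simp only [ne_eq, Nat.add_one_ne_zero, not_false_eq_true, filter_true, card_product] at hne
  rw [lcpPairs, sq, ← hne, card_filter_add_card_filter_not, card_product, sq]

lemma sub_one_mul_card_lcpPairs_zero (n : ℕ) :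
    ((Fintype.card α : ℤ) - 1) * #(lcpPairs α n 0) = Fintype.card α ^ (2 * n + 1) - 1 := by
  cases n with
  | zero => simp [lcpPairs, listsLE, filter_singleton]
  | succ n =>
    have hsplit : (#(lcpPairs α (n + 1) 0) : ℤ) +
        Fintype.card α * #(listsLE α n) ^ 2 = (1 + Fintype.card α * #(listsLE α n)) ^ 2 := by
      exact_mod_cast card_listsLE_succ (α := α) n ▸ card_lcpPairs_zero_add n
    have hL := sub_one_mul_card_listsLE (α := α) n
    -- with `X = (m - 1) |L_n| = m^(n+1) - 1`: `(m - 1) |P_0(n+1)| = (m - 1) + m X (X + 2)`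
    linear_combination (Fintype.card α - 1 : ℤ) * hsplit + Fintype.card α *
      (((Fintype.card α : ℤ) - 1) * #(listsLE α n) + Fintype.card α ^ (n + 1) + 1) * hL

lemma sub_one_mul_card_lcpPairs {n d : ℕ} (hdn : d ≤ n) :
    ((Fintype.card α : ℤ) - 1) * #(lcpPairs α n d) =
      Fintype.card α ^ d * (Fintype.card α ^ (2 * (n - d) + 1) - 1) := by
  obtain ⟨k, rfl⟩ := Nat.exists_eq_add_of_le' hdn
  rw [card_lcpPairs_add, Nat.add_sub_cancel, Nat.cast_mul, Nat.cast_pow, mul_left_comm,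
    sub_one_mul_card_lcpPairs_zero]

theorem stmt_9_general (m n d : ℕ) (hdn : d ≤ n)
    (L : Finset (List (Fin m))) (hL : ∀ l : List (Fin m), l ∈ L ↔ l.length ≤ n)
    (P : Finset (List (Fin m) × List (Fin m)))
    (hP : P = (L ×ˢ L).filter (fun p => (lcp p.1 p.2).length = d)) :
    (m - 1) * P.card = m ^ d * (m ^ (2 * (n - d) + 1) - 1) := by
  have hPeq : P = lcpPairs (Fin m) n d := by
    rw [hP, show L = listsLE (Fin m) n from ext fun l => by rw [hL, mem_listsLE], lcpPairs]
  rcases Nat.eq_zero_or_pos m with rfl | hm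
  · simp -- both sides vanish, as `0 - 1 = 0` in `ℕ`
  have hcount := sub_one_mul_card_lcpPairs (α := Fin m) hdn
  rw [Fintype.card_fin, ← hPeq] at hcount
  zify [hm, Nat.one_le_pow _ _ hm]
  exact hcount

/-- For integers `m ≥ 2`, `n ≥ 1` and `1 ≤ d ≤ n`, the set `P_d` of ordered pairs `(a, b)` of
lists over `Fin m` of length at most `n` whose longest common prefix has length exactly `d`
satisfies `(m − 1)·|P_d| = m^d·(m^{2(n−d)+1} − 1)`. -/
theorem stmt_9 (m n d : ℕ) (hm : 2 ≤ m) (hn : 1 ≤ n) (hd : 1 ≤ d) (hdn : d ≤ n)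
    (L : Finset (List (Fin m))) (hL : ∀ l : List (Fin m), l ∈ L ↔ l.length ≤ n)
    (P : Finset (List (Fin m) × List (Fin m)))
    (hP : P = (L ×ˢ L).filter (fun p => (lcp p.1 p.2).length = d)) :
    (m - 1) * P.card = m ^ d * (m ^ (2 * (n - d) + 1) - 1) :=
  stmt_9_general m n d hdn L hL P hP
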